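/- Define f_z(u) := (1/2) erfc(√2 (z−u)) for z,u ∈ ℂ, and for a > 0 set F₁(z,w) := (1/√2) ∫_{−a}^{a} [ e^{−2(z−u)²} erfc(√2(w−u)) − e^{−2(w−u)²} erfc(√2(z−u)) ] du. Then ∂_z F₁(z,w) = e^{−(z−w)²} ( erfc(z+w−2a) − erfc(z+w+2a) ) − (1/√2) ( e^{−2(z−a)²} erfc(√2(w−a)) − e^{−2(z+a)²} erfc(√2(w+a)) ). -/

import Mathlib

open Complex intervalIntegral

/-- The error function, extended to an entire function of a complex variable. -/
noncomputable def cerf (z : ℂ) : ℂ :=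
  (2 / Real.sqrt Real.pi) * z * ∫ s in (0:ℝ)..1, Complex.exp (-((s:ℂ) * z)^2)

/-- The complementary error function `erfc z = 1 − erf z`, entire in `z`. -/
noncomputable def cerfc (z : ℂ) : ℂ := 1 - cerf z

/-- `F₁(z,w) = (1/√2) ∫_{−a}^{a} [e^(−2(z−u)²) erfc(√2(w−u)) − e^(−2(w−u)²) erfc(√2(z−u))] du`. -/
noncomputable def F1 (a : ℝ) (z w : ℂ) : ℂ :=
  (1 / Real.sqrt 2) * ∫ u in (-a)..a,
    (Complex.exp (-2*(z-(u:ℂ))^2) * cerfc (Real.sqrt 2 * (w - (u:ℂ)))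
      - Complex.exp (-2*(w-(u:ℂ))^2) * cerfc (Real.sqrt 2 * (z - (u:ℂ))))

/-!
Differentiate under the integral sign. The `z`-derivative of the integrand,
`-4(z-u) e^{-2(z-u)²} erfc(√2(w-u)) + (2√2/√π) e^{-2(w-u)²} e^{-2(z-u)²}`, is the `u`-derivative of
`Φ(u) = -e^{-2(z-u)²} erfc(√2(w-u)) + √2 e^{-(z-w)²} erfc(z+w-2u)`: the two Gaussian products
agree by the parallelogram identity `(z-w)² + (z+w-2u)² = 2(z-u)² + 2(w-u)²`. So the integral is
`Φ(a) - Φ(-a)`.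
-/

open Metric

section ParametricIntegral

variable {𝕜 : Type*} [RCLike 𝕜] {E : Type*} [NormedAddCommGroup E] [NormedSpace ℝ E]
  [NormedSpace 𝕜 E]

theorem hasDerivAt_intervalIntegral_of_continuous {F F' : 𝕜 → ℝ → E} {a b : ℝ} (x₀ : 𝕜)
    (hF : ∀ x, Continuous (F x)) (hF' : Continuous (Function.uncurry F'))
    (hderiv : ∀ x t, HasDerivAt (fun x => F x t) (F' x t) x) :
    HasDerivAt (fun x => ∫ t in a..b, F x t) (∫ t in a..b, F' x₀ t) x₀ := by
  obtain ⟨C, hC⟩ := ((isCompact_closedBall x₀ 1).prod isCompact_uIcc).exists_bound_of_continuousOn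
    hF'.continuousOn
  have hF'x₀ : Continuous (F' x₀) := hF'.comp (Continuous.prodMk_right x₀)
  exact (hasDerivAt_integral_of_dominated_loc_of_deriv_le (bound := fun _ => C)
    (ball_mem_nhds x₀ one_pos) (.of_forall fun x => (hF x).aestronglyMeasurable)
    ((hF x₀).intervalIntegrable _ _) hF'x₀.aestronglyMeasurable
    (.of_forall fun t ht x hx => hC (x, t) ⟨ball_subset_closedBall hx, Set.uIoc_subset_uIcc ht⟩)
    intervalIntegrable_const (.of_forall fun t _ x _ => hderiv x t)).2

end ParametricIntegral

theorem hasDerivAt_mul_exp_neg_sq (c x : ℂ) :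
    HasDerivAt (fun x => x * exp (-(c * x) ^ 2))
      ((1 - 2 * c ^ 2 * x ^ 2) * exp (-(c * x) ^ 2)) x := by
  have hsq : HasDerivAt (fun x => -(c * x) ^ 2) (-(2 * c ^ 2 * x)) x := by
    refine (((hasDerivAt_id' x).const_mul c).fun_pow 2).fun_neg.congr_deriv ?_
    push_cast
    ring
  refine ((hasDerivAt_id' x).mul hsq.cexp).congr_deriv ?_
  ring

theorem hasDerivAt_cerf (z : ℂ) :
    HasDerivAt cerf (2 / Real.sqrt Real.pi * exp (-z ^ 2)) z := by
  have hcerf : cerf = fun ζ =>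
      2 / Real.sqrt Real.pi * ∫ s in (0:ℝ)..1, ζ * exp (-((s:ℂ) * ζ) ^ 2) := by
    funext ζ
    simp only [cerf, mul_assoc, intervalIntegral.integral_const_mul]
  set G : ℂ → ℝ → ℂ := fun ζ s => (1 - 2 * (s:ℂ) ^ 2 * ζ ^ 2) * exp (-((s:ℂ) * ζ) ^ 2)
  have hG : Continuous (Function.uncurry G) := by
    simp only [G]
    fun_prop
  -- `ζ * exp (-(s ζ)²)` is symmetric in `s` and `ζ` up to the prefactor, so
  -- `hasDerivAt_mul_exp_neg_sq` also computes its `s`-derivative.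
  have hGs : ∀ s : ℝ, HasDerivAt (fun s : ℝ => (s:ℂ) * exp (-((s:ℂ) * z) ^ 2)) (G z s) s := by
    intro s
    have hs := (hasDerivAt_mul_exp_neg_sq z s).comp_ofReal
    simp only [mul_comm z] at hs
    refine hs.congr_deriv ?_
    simp only [G]
    ring
  have hint : ∫ s in (0:ℝ)..1, G z s = exp (-z ^ 2) := by
    rw [integral_eq_sub_of_hasDerivAt (fun s _ => hGs s)
      ((hG.comp (Continuous.prodMk_right z)).intervalIntegrable _ _)]
    simp
  rw [hcerf, ← hint]
  exact (hasDerivAt_intervalIntegral_of_continuous z (fun ζ => by fun_prop) hG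
    (fun ζ s => hasDerivAt_mul_exp_neg_sq s ζ)).const_mul _

@[fun_prop]
theorem continuous_cerfc : Continuous cerfc :=
  continuous_iff_continuousAt.2 fun z => ((hasDerivAt_cerf z).const_sub 1).continuousAt

section ChainRule

variable {𝕜 : Type*} [NontriviallyNormedField 𝕜] [NormedAlgebra 𝕜 ℂ] {f : 𝕜 → ℂ} {f' : ℂ}
  {x : 𝕜}

theorem HasDerivAt.cerfc (hf : HasDerivAt f f' x) :
    HasDerivAt (fun x => _root_.cerfc (f x))
      (-(2 / Real.sqrt Real.pi * Complex.exp (-f x ^ 2)) * f') x :=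
  ((hasDerivAt_cerf (f x)).const_sub 1).comp x hf

theorem HasDerivAt.cexp_neg_two_mul_sq (hf : HasDerivAt f f' x) :
    HasDerivAt (fun x => Complex.exp (-2 * f x ^ 2))
      (-4 * f x * f' * Complex.exp (-2 * f x ^ 2)) x := by
  refine ((hf.fun_pow 2).const_mul (-2 : ℂ)).cexp.congr_deriv ?_
  push_cast
  ring

theorem HasDerivAt.cerfc_sqrt_two_mul (hf : HasDerivAt f f' x) :
    HasDerivAt (fun x => _root_.cerfc ((Real.sqrt 2 : ℂ) * f x))
      (-(2 * Real.sqrt 2 / Real.sqrt Real.pi) * Complex.exp (-2 * f x ^ 2) * f') x := by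
  have hsqrt : ((Real.sqrt 2 : ℝ) : ℂ) ^ 2 = 2 := by
    rw [← Complex.ofReal_pow, Real.sq_sqrt zero_le_two, Complex.ofReal_ofNat]
  refine (hf.const_mul (Real.sqrt 2 : ℂ)).cerfc.congr_deriv ?_
  rw [mul_pow, hsqrt]
  ring_nf

end ChainRule

noncomputable def F1Integrand (w z : ℂ) (u : ℝ) : ℂ :=
  Complex.exp (-2 * (z - u) ^ 2) * cerfc (Real.sqrt 2 * (w - u))
    - Complex.exp (-2 * (w - u) ^ 2) * cerfc (Real.sqrt 2 * (z - u))

noncomputable def F1IntegrandDeriv (w z : ℂ) (u : ℝ) : ℂ :=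
  -4 * (z - u) * Complex.exp (-2 * (z - u) ^ 2) * cerfc (Real.sqrt 2 * (w - u))
    + 2 * Real.sqrt 2 / Real.sqrt Real.pi
      * Complex.exp (-2 * (w - u) ^ 2) * Complex.exp (-2 * (z - u) ^ 2)

noncomputable def F1Primitive (w z : ℂ) (u : ℝ) : ℂ :=
  -Complex.exp (-2 * (z - u) ^ 2) * cerfc (Real.sqrt 2 * (w - u))
    + Real.sqrt 2 * Complex.exp (-(z - w) ^ 2) * cerfc (z + w - 2 * u)

theorem continuous_F1Integrand (w z : ℂ) : Continuous (F1Integrand w z) := by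
  unfold F1Integrand
  fun_prop

theorem continuous_F1IntegrandDeriv (w : ℂ) :
    Continuous (Function.uncurry (F1IntegrandDeriv w)) := by
  unfold F1IntegrandDeriv
  fun_prop

theorem hasDerivAt_F1Integrand (w z : ℂ) (u : ℝ) :
    HasDerivAt (fun z => F1Integrand w z u) (F1IntegrandDeriv w z u) z := by
  have hz := (hasDerivAt_id' z).sub_const (u : ℂ)
  refine ((hz.cexp_neg_two_mul_sq.mul_const _).sub
    (hz.cerfc_sqrt_two_mul.const_mul _)).congr_deriv ?_
  unfold F1IntegrandDeriv
  ring

theorem hasDerivAt_F1Primitive (w z : ℂ) (u : ℝ) :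
    HasDerivAt (F1Primitive w z) (F1IntegrandDeriv w z u) u := by
  have hu := (hasDerivAt_id' u).ofReal_comp
  have parallelogram : Complex.exp (-(z - w) ^ 2) * Complex.exp (-(z + w - 2 * u) ^ 2)
      = Complex.exp (-2 * (w - u) ^ 2) * Complex.exp (-2 * (z - u) ^ 2) := by
    rw [← Complex.exp_add, ← Complex.exp_add]
    ring_nf
  refine ((((hu.const_sub z).cexp_neg_two_mul_sq.fun_neg).mul
    (hu.const_sub w).cerfc_sqrt_two_mul).add
    (((hu.const_mul 2).const_sub (z + w)).cerfc.const_mul _)).congr_deriv ?_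
  unfold F1IntegrandDeriv
  push_cast
  linear_combination (4 * Real.sqrt 2 / Real.sqrt Real.pi : ℂ) * parallelogram

theorem hasDerivAt_F1_general (a : ℝ) (w z : ℂ) :
    HasDerivAt (fun ζ => F1 a ζ w)
      (Complex.exp (-(z-w)^2) * (cerfc (z+w-2*(a:ℂ)) - cerfc (z+w+2*(a:ℂ)))
        - (1 / Real.sqrt 2) *
          (Complex.exp (-2*(z-(a:ℂ))^2) * cerfc (Real.sqrt 2 * (w-(a:ℂ)))
            - Complex.exp (-2*(z+(a:ℂ))^2) * cerfc (Real.sqrt 2 * (w+(a:ℂ))))) z := by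
  have hint : ∫ u in (-a)..a, F1IntegrandDeriv w z u = F1Primitive w z a - F1Primitive w z (-a) :=
    integral_eq_sub_of_hasDerivAt (fun u _ => hasDerivAt_F1Primitive w z u)
      (((continuous_F1IntegrandDeriv w).comp (Continuous.prodMk_right z)).intervalIntegrable _ _)
  have hF1 := (hasDerivAt_intervalIntegral_of_continuous z (continuous_F1Integrand w)
    (continuous_F1IntegrandDeriv w) (hasDerivAt_F1Integrand w) (a := -a) (b := a)).const_mul
    (1 / Real.sqrt 2 : ℂ)
  rw [hint] at hF1
  refine hF1.congr_deriv ?_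
  simp only [F1Primitive, Complex.ofReal_neg, mul_neg, sub_neg_eq_add]
  field_simp
  ring

/-- The derivative of `F₁` in its first variable. -/
theorem hasDerivAt_F1 (a : ℝ) (ha : 0 < a) (w z : ℂ) :
    HasDerivAt (fun ζ => F1 a ζ w)
      (Complex.exp (-(z-w)^2) * (cerfc (z+w-2*(a:ℂ)) - cerfc (z+w+2*(a:ℂ)))
        - (1 / Real.sqrt 2) *
          (Complex.exp (-2*(z-(a:ℂ))^2) * cerfc (Real.sqrt 2 * (w-(a:ℂ)))
            - Complex.exp (-2*(z+(a:ℂ))^2) * cerfc (Real.sqrt 2 * (w+(a:ℂ))))) z :=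
  hasDerivAt_F1_general a w z
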